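/- arXiv:1009.5135 — 7 statements merged into one kernel-verified Lean document; each statement's English description precedes it below -/
import Mathlib

section
/- Let k be a field of characteristic 2. The quotient ring A = k[[t,w]]/(w + (1+t)w² + t³) is isomorphic as a topological k-algebra to k[[t]], via the map sending t to t and w to s/(1+t), where s = Σ_{i≥0} (t³+t⁴)^{2^i}. -/
open PowerSeries
noncomputable section

/-- The product (= `t`-adic) topology on `k[[t]]`, `k` being discrete. -/
def psTop (k : Type*) : TopologicalSpace (PowerSeries k) :=
  letI : TopologicalSpace k := ⊥
  inferInstanceAs (TopologicalSpace ((Unit →₀ ℕ) → k))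

/-- The product (= `(t,w)`-adic) topology on `k[[t,w]] = k[[t]][[w]]`, `k` being discrete. -/
def ps2Top (k : Type*) : TopologicalSpace (PowerSeries (PowerSeries k)) :=
  letI := psTop k
  inferInstanceAs (TopologicalSpace ((Unit →₀ ℕ) → PowerSeries k))

variable (k : Type*) [Field k]

/-- The relation `w + (1+t)w² + t³` in `k[[t,w]] = k[[t]][[w]]` (the variable `X` of the
outer ring is `w`, and `t` is the image of the variable of the inner ring `k[[t]]`). -/
def relF : PowerSeries (PowerSeries k) :=
  X + (1 + PowerSeries.C (R := PowerSeries k) X) * X ^ 2 + PowerSeries.C (R := PowerSeries k) X ^ 3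

/-- The ring `A = k[[t,w]]/(w + (1+t)w² + t³)`. -/
def NgA := PowerSeries (PowerSeries k) ⧸ Ideal.span {relF k}

instance : CommRing (NgA k) := Ideal.Quotient.commRing _
instance : Algebra k (NgA k) := Ideal.Quotient.algebra k

/-- The quotient topology on `A`. -/
def aTop : TopologicalSpace (NgA k) :=
  (ps2Top k).coinduced (Ideal.Quotient.mk (Ideal.span {relF k}))

/-- The image of `t` in `A`. -/
def tA : NgA k := Ideal.Quotient.mk _ (PowerSeries.C (R := PowerSeries k) X)

/-- The image of `w` in `A`. -/
def wA : NgA k := Ideal.Quotient.mk _ (X : PowerSeries (PowerSeries k))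

/-- The power series `s = Σ_{i≥0} (t³+t⁴)^{2^i}` in `k[[t]]`, given coefficientwise
(the term of index `i` has `t`-adic order `3·2^i > n` for `i > n`). -/
def paperS : PowerSeries k :=
  PowerSeries.mk fun n =>
    ∑ i ∈ Finset.range (n + 1), PowerSeries.coeff (R := k) n ((X ^ 3 + X ^ 4) ^ 2 ^ i)


/-! In characteristic 2, Frobenius shifts the series `s = Σ (t³+t⁴)^{2^i}` by one term, so
`s + s² = t³ + t⁴` and `a = s/(1+t)` satisfies `a + (1+t)a² = t³`. The relation then factors as
`(w - a) · u` with `u` a unit, so `A = k[[t]][[w]]/(w - a)`. Weierstrass division by the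
distinguished polynomial `w - a` represents every class by a constant, so evaluation at `w = a`
(defined and continuous because `a` is topologically nilpotent) is an isomorphism onto `k[[t]]`,
whose inverse `f ↦ f mod (w - a)` is continuous as well. -/

namespace Polynomial

theorem isDistinguishedAt_X_sub_C {R : Type*} [CommRing R] {I : Ideal R} {a : R} (ha : a ∈ I) :
    (X - C a).IsDistinguishedAt I where
  mem {n} hn := by
    nontriviality R
    rw [natDegree_X_sub_C, Nat.lt_one_iff] at hn
    subst hn
    simpa using I.neg_mem ha
  monic := monic_X_sub_C a

end Polynomial

namespace PowerSeries

variable {R : Type*} [CommRing R]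

theorem algebraMap_quotient_span_X_sub_C_surjective {I : Ideal R} [IsAdicComplete I R] {a : R}
    (ha : a ∈ I) :
    Function.Surjective (algebraMap R (R⟦X⟧ ⧸ Ideal.span {X - C a})) := by
  have hcoe : ((Polynomial.X - Polynomial.C a : Polynomial R) : R⟦X⟧) = X - C a := by simp
  rw [← hcoe]
  intro y
  have H := (Polynomial.isDistinguishedAt_X_sub_C ha).isWeierstrassDivisorAt'
  obtain ⟨q, hq⟩ := Polynomial.X_sub_C_dvd_sub_C_eval (a := a) (p := H.mod' y)
  refine ⟨(H.mod' y).eval a, .trans ?_ H.mk_mod'_eq_self⟩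
  refine Ideal.Quotient.eq.mpr (Ideal.mem_span_singleton'.mpr ⟨-q, ?_⟩)
  have hq' := congrArg (fun f : Polynomial R => (f : R⟦X⟧)) hq
  simp only [Polynomial.coe_sub, Polynomial.coe_mul, Polynomial.coe_C, Polynomial.coe_X] at hq' ⊢
  rw [algebraMap_eq]
  linear_combination hq'

section Evaluation

open WithPiTopology

variable [UniformSpace R] [IsUniformAddGroup R] [IsTopologicalRing R] [CompleteSpace R]
  [T2Space R] [IsLinearTopology R R] {a : R}

@[simp]
theorem aeval_C (ha : HasEval a) (r : R) : aeval ha (C r) = r := by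
  simp [← Polynomial.coe_C]

@[simp]
theorem aeval_X (ha : HasEval a) : aeval ha (X : R⟦X⟧) = a := by
  simp [← Polynomial.coe_X]

noncomputable def quotientSpanXSubCAlgEquiv (K : Type*) [CommRing K] [Algebra K R]
    (ha : HasEval a) (hsurj : Function.Surjective (algebraMap R (R⟦X⟧ ⧸ Ideal.span {X - C a}))) :
    (R⟦X⟧ ⧸ Ideal.span {X - C a}) ≃ₐ[K] R :=
  AlgEquiv.ofAlgHom
    (Ideal.Quotient.liftₐ _ ((aeval ha).restrictScalars K) fun f hf => by
      obtain ⟨g, rfl⟩ := Ideal.mem_span_singleton'.mp hf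
      simp)
    ((Algebra.ofId R _).restrictScalars K)
    (AlgHom.ext fun r => by simp [← Ideal.Quotient.mk_algebraMap])
    (AlgHom.ext fun x => by
      obtain ⟨r, rfl⟩ := hsurj x
      simp [← Ideal.Quotient.mk_algebraMap])

end Evaluation

end PowerSeries

theorem CharTwo.add_sq_eq_of_hasSum_pow_two_pow {R : Type*} [CommRing R] [CharP R 2]
    [TopologicalSpace R] [IsTopologicalRing R] [T2Space R] {x s : R}
    (h : HasSum (fun i => x ^ 2 ^ i) s) : s + s ^ 2 = x := by
  have hsq : HasSum (fun i => x ^ 2 ^ (i + 1)) (s ^ 2) := by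
    simpa [Function.comp_def, frobenius_def, ← pow_mul, ← pow_succ] using
      h.map (frobenius R 2) (continuous_pow 2)
  have htail : HasSum (fun i => x ^ 2 ^ (i + 1)) (s - x) := by
    simpa using (hasSum_nat_add_iff' 1).mpr h
  linear_combination hsq.unique htail + (s - x) * CharTwo.two_eq_zero (R := R)

open PowerSeries.WithPiTopology in
theorem hasSum_paperS [TopologicalSpace k] :
    HasSum (fun i => (X ^ 3 + X ^ 4 : PowerSeries k) ^ 2 ^ i) (paperS k) := by
  refine (hasSum_iff_hasSum_coeff k).mpr fun n => ?_
  rw [paperS, coeff_mk]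
  refine hasSum_sum_of_ne_finset_zero fun i hi => ?_
  have hdvd : (X : PowerSeries k) ^ (3 * 2 ^ i) ∣ (X ^ 3 + X ^ 4) ^ 2 ^ i := by
    rw [pow_mul]
    exact pow_dvd_pow_of_dvd (dvd_add dvd_rfl (pow_dvd_pow X (by norm_num))) _
  refine X_pow_dvd_iff.mp hdvd n ?_
  have hni : n + 1 ≤ i := by simpa using hi
  calc n < 2 ^ n := Nat.lt_two_pow_self
    _ ≤ 2 ^ i := Nat.pow_le_pow_right two_pos (by omega)
    _ ≤ 3 * 2 ^ i := Nat.le_mul_of_pos_left _ (by norm_num)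

theorem paperS_add_sq [CharP k 2] : paperS k + paperS k ^ 2 = X ^ 3 + X ^ 4 := by
  let _ : TopologicalSpace k := ⊥
  have : DiscreteTopology k := ⟨rfl⟩
  have := charP_of_injective_algebraMap' k (A := PowerSeries k) 2
  open PowerSeries.WithPiTopology in
  exact CharTwo.add_sq_eq_of_hasSum_pow_two_pow (hasSum_paperS k)

theorem paperS_mul_inv_add_mul_sq [CharP k 2] :
    paperS k * (1 + X)⁻¹ + (1 + X) * (paperS k * (1 + X)⁻¹) ^ 2 = X ^ 3 := by
  have hu : (1 + X : PowerSeries k) * (1 + X)⁻¹ = 1 := PowerSeries.mul_inv_cancel _ (by simp)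
  linear_combination (1 + X)⁻¹ * paperS_add_sq k + (paperS k ^ 2 * (1 + X)⁻¹ + X ^ 3) * hu

theorem constantCoeff_paperS : constantCoeff (paperS k) = 0 := by
  rw [← coeff_zero_eq_constantCoeff_apply, paperS, coeff_mk]
  simp

theorem relF_eq_X_sub_C_mul [CharP k 2] {a : PowerSeries k} (ha : a + (1 + X) * a ^ 2 = X ^ 3) :
    relF k = (X - C a) * (C (1 + (1 + X) * a) + C (1 + X) * X) := by
  have := charP_of_injective_algebraMap' k (A := PowerSeries (PowerSeries k)) 2
  have hC := congrArg C ha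
  simp only [map_add, map_mul, map_pow, map_one] at hC
  rw [relF]
  simp only [map_add, map_mul, map_one]
  linear_combination hC + C X ^ 3 * CharTwo.two_eq_zero (R := PowerSeries (PowerSeries k))

theorem span_relF [CharP k 2] {a : PowerSeries k} (ha : a + (1 + X) * a ^ 2 = X ^ 3)
    (ha₀ : constantCoeff a = 0) : Ideal.span {relF k} = Ideal.span {X - C a} := by
  rw [relF_eq_X_sub_C_mul k ha]
  refine Ideal.span_singleton_mul_right_unit ?_ _
  simp [isUnit_iff_constantCoeff, ha₀]

/-- for `k` of characteristic 2, the quotient `A = k[[t,w]]/(w + (1+t)w² + t³)`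
is isomorphic as a topological `k`-algebra to `k[[t]]` via a map sending `t` to `t` and
`w` to `s/(1+t)`, where `s = Σ_{i≥0} (t³+t⁴)^{2^i}`. -/
theorem NgA_iso_powerSeries [CharP k 2] :
    letI := psTop k
    letI := aTop k
    ∃ e : NgA k ≃ₐ[k] PowerSeries k,
      Continuous e ∧ Continuous e.symm ∧
        e (tA k) = X ∧ e (wA k) = paperS k * (1 + X : PowerSeries k)⁻¹ := by
  open PowerSeries.WithPiTopology in
  let _ : UniformSpace k := ⊥
  set a := paperS k * (1 + X : PowerSeries k)⁻¹
  have ha₀ : constantCoeff a = 0 := by simp [a, constantCoeff_paperS]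
  have hev : HasEval a := isTopologicallyNilpotent_of_constantCoeff_zero ha₀
  have hsurj := algebraMap_quotient_span_X_sub_C_surjective
    (Ideal.mem_span_singleton.mpr (X_dvd_iff.mpr ha₀))
  let e : NgA k ≃ₐ[k] PowerSeries k :=
    (Ideal.quotientEquivAlgOfEq k (span_relF k (paperS_mul_inv_add_mul_sq k) ha₀)).trans
      (quotientSpanXSubCAlgEquiv k hev hsurj)
  have he : ⇑e ∘ Ideal.Quotient.mk _ = aeval hev := rfl
  have he_symm : ⇑e.symm = Ideal.Quotient.mk _ ∘ C := funext fun r =>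
    e.symm_apply_eq.mpr ((congrFun he (C r)).trans (aeval_C hev r)).symm
  refine ⟨e, continuous_coinduced_dom.mpr (he ▸ continuous_aeval hev), ?_,
    (congrFun he _).trans (aeval_C hev X), (congrFun he _).trans (aeval_X hev)⟩
  let _ := aTop k
  exact he_symm ▸ continuous_coinduced_rng.comp continuous_C
end
end

section
/- Let k be a field of characteristic 2 and A = k[[t,w]]/(w + (1+t)w² + t³). The assignments σ(t) = (t+w)/(1+t) and σ(w) = w/(1+t) define a continuous k-algebra endomorphism of A, i.e., the relation w + (1+t)w² + t³ is sent to a multiple of itself (in fact to zero in A). -/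
open PowerSeries
noncomputable section
noncomputable section

variable (k : Type*) [Field k]

/-! Write `k[[t,w]]` as `MvPowerSeries (Option Unit) k`. Since `(t+w)/(1+t)` and `w/(1+t)` have
zero constant term, substituting them for `t` and `w` is a continuous `k`-algebra endomorphism `Φ`
of `k[[t,w]]`. In characteristic `2`, `Φ` sends the relation `f = w + (1+t)w² + t³` to
`(1+t)⁻³ f`, so `Φ` preserves `(f)` and descends to a continuous endomorphism `σ` of `A`.
The first claim is then just `σ` applied to the relation `w + (1+t)w² + t³ = 0` of `A`. -/

theorem map_ringInverse {M₀ N₀ F : Type*} [MonoidWithZero M₀] [MonoidWithZero N₀]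
    [FunLike F M₀ N₀] [MonoidHomClass F M₀ N₀] (f : F) {x : M₀} (hx : IsUnit x) :
    f (Ring.inverse x) = Ring.inverse (f x) := by
  obtain ⟨u, rfl⟩ := hx
  change f (Ring.inverse u) = Ring.inverse (Units.map (f : M₀ →* N₀) u : N₀)
  rw [Ring.inverse_unit, Ring.inverse_unit, ← map_inv, Units.coe_map]
  rfl

theorem relation_subst_eq_cube_mul {S : Type*} [CommRing S] (two : (2 : S) = 0) {x y u : S}
    (hu : (1 + x) * u = 1) :
    y * u + (1 + (x + y) * u) * (y * u) ^ 2 + ((x + y) * u) ^ 3 =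
      u ^ 3 * (y + (1 + x) * y ^ 2 + x ^ 3) := by
  linear_combination (y * u + y * u ^ 2 + y ^ 2 * u ^ 2 + x * y * u ^ 2) * hu +
    (y * u - y * u ^ 3 + y ^ 2 * u ^ 2 - y ^ 2 * u ^ 3 + y ^ 3 * u ^ 3 - x * y * u ^ 3 +
      x * y ^ 2 * u ^ 3 + x ^ 2 * y * u ^ 3) * two

theorem MvPowerSeries.isUnit_one_add_X {σ R : Type*} [Ring R] (i : σ) :
    IsUnit (1 + X i : MvPowerSeries σ R) := by
  simp [isUnit_iff_constantCoeff]

theorem PowerSeries.WithPiTopology.continuous_of_continuous_coeff {R Y : Type*} [Semiring R]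
    [TopologicalSpace R] [TopologicalSpace Y] {f : Y → PowerSeries R}
    (hf : ∀ n, Continuous fun y => coeff n (f y)) : Continuous f :=
  continuous_pi fun d => by
    rw [Finsupp.unique_single d]
    exact hf (d ())

namespace MvPowerSeries.WithPiTopology

open PowerSeries.WithPiTopology

variable {σ R : Type*} [CommSemiring R] [TopologicalSpace R]

theorem continuous_optionEquivLeft : Continuous (optionEquivLeft σ R) :=
  continuous_of_continuous_coeff fun n => continuous_pi fun x => by
    simpa only [← coeff_apply, coeff_coeff_optionEquivLeft] using
      continuous_coeff R (x.optionElim n)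

theorem continuous_optionEquivLeft_symm : Continuous (optionEquivLeft σ R).symm := by
  refine continuous_pi fun y => ?_
  have h (q : PowerSeries (MvPowerSeries σ R)) :
      coeff y ((optionEquivLeft σ R).symm q) = coeff y.some (PowerSeries.coeff (y none) q) := by
    conv_rhs => rw [← (optionEquivLeft σ R).apply_symm_apply q, coeff_coeff_optionEquivLeft,
      Finsupp.optionElim_some]
  simp only [← coeff_apply, h]
  exact (continuous_coeff R y.some).comp (PowerSeries.WithPiTopology.continuous_coeff _ (y none))

end MvPowerSeries.WithPiTopology

namespace NgA

open MvPowerSeries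

local notation "Ψ" => optionEquivLeft Unit k

/-- `Ψ` sends `X none` to `w` and `X (some ())` to `t`. -/
def sigmaSubst : Option Unit → MvPowerSeries (Option Unit) k
  | none => X none * Ring.inverse (1 + X (some ()))
  | some _ => (X (some ()) + X none) * Ring.inverse (1 + X (some ()))

theorem hasSubst_sigmaSubst : HasSubst (sigmaSubst k) :=
  hasSubst_of_constantCoeff_zero (by rintro (_ | _) <;> simp [sigmaSubst])

def sigmaLift : PowerSeries (PowerSeries k) →ₐ[k] PowerSeries (PowerSeries k) :=
  ((Ψ : _ →ₐ[k] _).comp (substAlgHom (hasSubst_sigmaSubst k))).comp (Ψ).symm.toAlgHom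

theorem sigmaLift_apply (f : PowerSeries (PowerSeries k)) :
    sigmaLift k f = Ψ (subst (sigmaSubst k) ((Ψ).symm f)) := by
  simp [sigmaLift]

theorem continuous_sigmaLift : @Continuous _ _ (ps2Top k) (ps2Top k) (sigmaLift k) := by
  let _ : UniformSpace k := ⊥
  have _ : DiscreteUniformity k := ⟨rfl⟩
  rw [show ⇑(sigmaLift k) = Ψ ∘ subst (sigmaSubst k) ∘ (Ψ).symm from
    funext (sigmaLift_apply k)]
  open WithPiTopology in
  exact continuous_optionEquivLeft.comp
    ((continuous_subst (hasSubst_sigmaSubst k)).comp continuous_optionEquivLeft_symm)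

theorem optionEquivLeft_symm_relF :
    (Ψ).symm (relF k) = X none + (1 + X (some ())) * X none ^ 2 + X (some ()) ^ 3 := by
  have ht : (Ψ).symm (PowerSeries.C PowerSeries.X) = X (some ()) :=
    (Ψ).symm_apply_eq.2 (optionEquivLeft_X_some ()).symm
  have hw : (Ψ).symm PowerSeries.X = X none := (Ψ).symm_apply_eq.2 optionEquivLeft_X_none.symm
  simp only [relF, map_add, map_mul, map_pow, map_one, ht, hw]

theorem sigmaLift_relF [CharP k 2] :
    sigmaLift k (relF k) = Ψ (Ring.inverse (1 + X (some ())) ^ 3) * relF k := by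
  have two : (2 : MvPowerSeries (Option Unit) k) = 0 := by
    have := congrArg (algebraMap k (MvPowerSeries (Option Unit) k)) (CharTwo.two_eq_zero (R := k))
    rwa [map_ofNat, map_zero] at this
  have hu := Ring.mul_inverse_cancel _ (isUnit_one_add_X (R := k) (some ()))
  have hsubst : subst (sigmaSubst k) ((Ψ).symm (relF k)) =
      Ring.inverse (1 + X (some ())) ^ 3 * (Ψ).symm (relF k) := by
    rw [optionEquivLeft_symm_relF, ← coe_substAlgHom (hasSubst_sigmaSubst k)]
    simp only [map_add, map_mul, map_pow, map_one, MvPowerSeries.substAlgHom_X, sigmaSubst]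
    exact relation_subst_eq_cube_mul two hu
  rw [sigmaLift_apply, hsubst, map_mul, AlgEquiv.apply_symm_apply]

theorem span_relF_le_comap_sigmaLift [CharP k 2] :
    Ideal.span {relF k} ≤ (Ideal.span {relF k}).comap (sigmaLift k) := by
  rw [Ideal.span_le, Set.singleton_subset_iff, SetLike.mem_coe, Ideal.mem_comap, sigmaLift_relF]
  exact Ideal.mul_mem_left _ _ (Ideal.mem_span_singleton_self _)

def sigma [CharP k 2] : NgA k →ₐ[k] NgA k :=
  Ideal.quotientMapₐ _ (sigmaLift k) (span_relF_le_comap_sigmaLift k)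

theorem continuous_sigma [CharP k 2] : @Continuous _ _ (aTop k) (aTop k) (sigma k) := by
  let _ := ps2Top k
  let _ := aTop k
  exact continuous_coinduced_dom.2 (continuous_coinduced_rng.comp (continuous_sigmaLift k))

def mkOfMvPowerSeries : MvPowerSeries (Option Unit) k →+* NgA k :=
  (Ideal.Quotient.mk _).comp (Ψ : MvPowerSeries (Option Unit) k →+* PowerSeries (PowerSeries k))

theorem mkOfMvPowerSeries_X_some : mkOfMvPowerSeries k (X (some ())) = tA k := by
  change Ideal.Quotient.mk _ (Ψ (X (some ()))) = _
  rw [optionEquivLeft_X_some]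
  rfl

theorem mkOfMvPowerSeries_X_none : mkOfMvPowerSeries k (X none) = wA k := by
  change Ideal.Quotient.mk _ (Ψ (X none)) = _
  rw [optionEquivLeft_X_none]
  rfl

theorem mkOfMvPowerSeries_inverse_one_add_X :
    mkOfMvPowerSeries k (Ring.inverse (1 + X (some ()))) = Ring.inverse (1 + tA k) := by
  rw [map_ringInverse _ (isUnit_one_add_X _), map_add, map_one, mkOfMvPowerSeries_X_some]

theorem sigma_mkOfMvPowerSeries [CharP k 2] (f : MvPowerSeries (Option Unit) k) :
    sigma k (mkOfMvPowerSeries k f) = mkOfMvPowerSeries k (subst (sigmaSubst k) f) := by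
  change Ideal.Quotient.mk _ (sigmaLift k (Ψ f)) = _
  rw [sigmaLift_apply, AlgEquiv.symm_apply_apply]
  rfl

theorem sigma_tA [CharP k 2] : sigma k (tA k) = (tA k + wA k) * Ring.inverse (1 + tA k) := by
  rw [← mkOfMvPowerSeries_X_some, sigma_mkOfMvPowerSeries, subst_X (hasSubst_sigmaSubst k)]
  simp only [sigmaSubst, map_mul, map_add, mkOfMvPowerSeries_X_some, mkOfMvPowerSeries_X_none,
    mkOfMvPowerSeries_inverse_one_add_X]

theorem sigma_wA [CharP k 2] : sigma k (wA k) = wA k * Ring.inverse (1 + tA k) := by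
  rw [← mkOfMvPowerSeries_X_none, sigma_mkOfMvPowerSeries, subst_X (hasSubst_sigmaSubst k)]
  simp only [sigmaSubst, map_mul, mkOfMvPowerSeries_X_none, mkOfMvPowerSeries_inverse_one_add_X]

theorem wA_add_one_add_tA_mul_wA_sq_add_tA_pow_three :
    wA k + (1 + tA k) * wA k ^ 2 + tA k ^ 3 = 0 :=
  Ideal.Quotient.eq_zero_iff_mem.2 (Ideal.mem_span_singleton_self (relF k))

end NgA

/-- for `k` of characteristic 2 and `A = k[[t,w]]/(w + (1+t)w² + t³)`, the
assignments `σ(t) = (t+w)/(1+t)`, `σ(w) = w/(1+t)` define a continuous `k`-algebra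
endomorphism of `A`; i.e. the relation `w + (1+t)w² + t³`, evaluated at these images,
is zero in `A`, and there is a continuous `k`-algebra endomorphism realizing them. -/
theorem NgA_sigma_welldefined [CharP k 2] :
    letI := aTop k
    (wA k * Ring.inverse (1 + tA k) +
        (1 + (tA k + wA k) * Ring.inverse (1 + tA k)) *
          (wA k * Ring.inverse (1 + tA k)) ^ 2 +
        ((tA k + wA k) * Ring.inverse (1 + tA k)) ^ 3 = 0) ∧
      ∃ σ : NgA k →ₐ[k] NgA k, Continuous σ ∧
        σ (tA k) = (tA k + wA k) * Ring.inverse (1 + tA k) ∧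
        σ (wA k) = wA k * Ring.inverse (1 + tA k) := by
  have h := congrArg (NgA.sigma k) (NgA.wA_add_one_add_tA_mul_wA_sq_add_tA_pow_three k)
  simp only [map_add, map_mul, map_pow, map_one, map_zero, NgA.sigma_tA, NgA.sigma_wA] at h
  exact ⟨h, NgA.sigma k, NgA.continuous_sigma k, NgA.sigma_tA k, NgA.sigma_wA k⟩
end
end
end

section
/- Let k be a field of characteristic 2, s = Σ_{i≥0}(t³+t⁴)^{2^i} ∈ k[[t]]. Then t/(1+t) + s/(1+t)² = t + t² + Σ_{j≥0} Σ_{ℓ=0}^{2^j - 1} t^{6·2^j + 2ℓ} in k[[t]]. -/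
/-!
In characteristic 2 we have `(1 + t)² = 1 + t²`, so after multiplying by `(1 + t)²` the claim
becomes `s = t³ + t⁴ + φ · (1 + t²)`, where `φ` is the double sum. By Frobenius the `i`-th term
of `s` is `t^(3·2^i) + t^(4·2^i)`, while for each `j` the inner sum of `φ` is a geometric sum in
`t²` and telescopes: `(∑_{ℓ < 2^j} t^(6·2^j + 2ℓ)) (1 + t²) = t^(6·2^j) + t^(8·2^j)`, which is the
`(j+1)`-th term of `s`.
-/

open PowerSeries
noncomputable section

variable (k : Type*) [Field k]

/-- The `t`-adically convergent double sum `Σ_{j≥0} Σ_{ℓ=0}^{2^j-1} t^{6·2^j+2ℓ}`, given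
coefficientwise (the terms with `j > n` do not contribute to the coefficient of `tⁿ`). -/
def phiTail : PowerSeries k :=
  PowerSeries.mk fun n =>
    ∑ j ∈ Finset.range (n + 1), ∑ l ∈ Finset.range (2 ^ j),
      if n = 6 * 2 ^ j + 2 * l then (1 : k) else 0


open Finset

namespace PowerSeries

instance instCharP {R : Type*} [Semiring R] (p : ℕ) [CharP R p] : CharP R⟦X⟧ p :=
  charP_of_injective_ringHom C_injective p

section LocFinSum

variable {R : Type*} [Semiring R]

/-- The `X`-adic sum `∑ i, f i`, computed coefficientwise; it is the genuine sum when
`X ^ i ∣ f i` for all `i`. -/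
def locFinSum (f : ℕ → R⟦X⟧) : R⟦X⟧ :=
  mk fun n => ∑ i ∈ range (n + 1), coeff n (f i)

variable {f : ℕ → R⟦X⟧}

theorem coeff_locFinSum (f : ℕ → R⟦X⟧) (n : ℕ) :
    coeff n (locFinSum f) = ∑ i ∈ range (n + 1), coeff n (f i) :=
  coeff_mk _ _

theorem coeff_locFinSum_of_lt (hf : ∀ i, X ^ i ∣ f i) {n N : ℕ} (hN : n < N) :
    coeff n (locFinSum f) = ∑ i ∈ range N, coeff n (f i) := by
  refine (coeff_locFinSum f n).trans (sum_subset (range_subset_range.2 hN) ?_)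
  intro i _ hi
  exact X_pow_dvd_iff.1 (hf i) n (by simpa using hi)

theorem locFinSum_mul (hf : ∀ i, X ^ i ∣ f i) (g : R⟦X⟧) :
    locFinSum f * g = locFinSum (fun i => f i * g) := by
  ext n
  calc coeff n (locFinSum f * g)
      = ∑ pq ∈ antidiagonal n, ∑ i ∈ range (n + 1),
          coeff pq.1 (f i) * coeff pq.2 g := by
        refine (coeff_mul _ _ _).trans (sum_congr rfl fun pq hpq => ?_)
        rw [coeff_locFinSum_of_lt hf
          (Nat.lt_add_one_of_le (HasAntidiagonal.antidiagonal.fst_le hpq)), sum_mul]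
    _ = coeff n (locFinSum fun i => f i * g) := by
        rw [sum_comm, coeff_locFinSum]
        simp only [coeff_mul]

theorem locFinSum_eq_add_locFinSum_succ (hf : ∀ i, X ^ i ∣ f i) :
    locFinSum f = f 0 + locFinSum (fun i => f (i + 1)) := by
  ext n
  rw [coeff_locFinSum_of_lt hf (by omega : n < n + 2), sum_range_succ', map_add,
    coeff_locFinSum, add_comm]

end LocFinSum

end PowerSeries

theorem CharTwo.sum_pow_add_two_mul_mul {R : Type*} [CommRing R] [CharP R 2] (x : R) (a N : ℕ) :
    (∑ l ∈ range N, x ^ (a + 2 * l)) * (1 + x ^ 2) = x ^ a + x ^ (a + 2 * N) := by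
  have h := geom_sum_mul (x ^ 2) N
  simp only [CharTwo.sub_eq_add, ← pow_mul] at h
  simp only [pow_add, ← mul_sum, mul_assoc, add_comm 1 (x ^ 2), h]
  ring

theorem paperS_eq_locFinSum [CharP k 2] :
    paperS k = locFinSum fun i => X ^ (3 * 2 ^ i) + X ^ (4 * 2 ^ i) := by
  have := Fact.mk Nat.prime_two
  simp only [paperS, locFinSum, add_pow_char_pow, ← pow_mul]

theorem phiTail_eq_locFinSum :
    phiTail k = locFinSum fun j => ∑ l ∈ range (2 ^ j), X ^ (6 * 2 ^ j + 2 * l) := by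
  ext n
  simp [phiTail, locFinSum, map_sum, coeff_X_pow]

theorem paperS_eq_add_phiTail_mul [CharP k 2] :
    paperS k = X ^ 3 + X ^ 4 + phiTail k * (1 + X ^ 2) := by
  have hle (i c : ℕ) (hc : 0 < c) : i ≤ c * 2 ^ i :=
    i.lt_two_pow_self.le.trans (Nat.le_mul_of_pos_left _ hc)
  rw [paperS_eq_locFinSum, phiTail_eq_locFinSum, locFinSum_mul, locFinSum_eq_add_locFinSum_succ]
  · simp only [CharTwo.sum_pow_add_two_mul_mul]
    congr 2
    funext i
    ring
  · exact fun i => dvd_add (pow_dvd_pow X (hle i 3 (by norm_num)))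
      (pow_dvd_pow X (hle i 4 (by norm_num)))
  · exact fun j => dvd_sum fun l _ => pow_dvd_pow X ((hle j 6 (by norm_num)).trans le_self_add)

/-- for `k` of characteristic 2 and `s = Σ_{i≥0}(t³+t⁴)^{2^i}`,
`t/(1+t) + s/(1+t)² = t + t² + Σ_{j≥0} Σ_{ℓ=0}^{2^j−1} t^{6·2^j+2ℓ}` in `k[[t]]`. -/
theorem sigma_t_formula [CharP k 2] :
    X * (1 + X : PowerSeries k)⁻¹ + paperS k * (((1 + X : PowerSeries k) ^ 2)⁻¹) =
      X + X ^ 2 + phiTail k := by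
  set u : k⟦X⟧ := 1 + X
  have hu : constantCoeff u ≠ 0 := by simp [u]
  have hu2 : constantCoeff (u ^ 2) ≠ 0 := by simpa using hu
  have hsq : u ^ 2 = 1 + X ^ 2 := by rw [CharTwo.add_sq, one_pow]
  have hcancel : (X * u⁻¹ + paperS k * (u ^ 2)⁻¹) * u ^ 2 = X * u + paperS k := by
    linear_combination (X * u) * PowerSeries.inv_mul_cancel u hu +
      paperS k * PowerSeries.inv_mul_cancel (u ^ 2) hu2
  refine mul_right_cancel₀ (b := u ^ 2) (ne_zero_of_map hu2) ?_
  rw [hcancel, hsq, paperS_eq_add_phiTail_mul]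
  ring
end
end

section
/- Let k be a field of characteristic 2 and define φ(t) = t + t² + Σ_{j≥0} Σ_{ℓ=0}^{2^j-1} t^{6·2^j + 2ℓ} ∈ k[[t]]. The continuous k-algebra endomorphism σ of k[[t]] with σ(t) = φ(t) is an automorphism of order exactly 4; in particular σ lies in the Nottingham group (σ(t) ≡ t mod t²) and σ² ≠ id. -/
open PowerSeries
noncomputable section

variable (k : Type*) [Field k]

/-- `φ(t) = t + t² + Σ_{j≥0} Σ_{ℓ=0}^{2^j-1} t^{6·2^j + 2ℓ}`. -/
def phiSeries : PowerSeries k := X + X ^ 2 + phiTail k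

/-!
In characteristic 2, comparing coefficients shows `φ = t + (1 + t²) φ²`. The series
`ρ = φ + t² / (1 + t²)` satisfies `ρ = φ + (1 + φ²) ρ²` and `t + ρ + t² + ρ² + t² ρ² = 0`, a relation
symmetric in `t` and `ρ`. Since `y = a + c y²` has at most one solution `y` without constant term,
applying `σ` to the equation of `φ` gives `σ(φ) = ρ`, so `σ²` is the substitution `t ↦ ρ`, and
applying that substitution to the symmetric relation gives `ρ(ρ(t)) = t`. Hence `σ⁴ = 1`, while
`σ² ≠ 1` as `ρ ≠ t`. Any continuous `σ` with `σ(t) = φ` is the substitution `t ↦ φ`, because a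
continuous endomorphism of `k[[t]]` is determined by the image of `t`.
-/

open scoped PowerSeries.WithPiTopology

namespace PowerSeries

instance {R : Type*} [CommRing R] (p : ℕ) [CharP R p] : CharP R⟦X⟧ p :=
  charP_of_injective_ringHom C_injective p

section Topology

variable {R : Type*} [CommRing R] [UniformSpace R] [DiscreteUniformity R]

theorem algHom_ext_of_continuous {ε₁ ε₂ : R⟦X⟧ →ₐ[R] R⟦X⟧}
    (h₁ : Continuous ε₁) (h₂ : Continuous ε₂) (h : ε₁ X = ε₂ X) : ε₁ = ε₂ := by
  rw [← aeval_unique h₁, ← aeval_unique h₂]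
  congr 1

theorem continuous_substAlgHom {a : R⟦X⟧} (ha : HasSubst a) :
    Continuous (substAlgHom ha : R⟦X⟧ →ₐ[R] R⟦X⟧) := by
  rw [coe_substAlgHom]
  exact MvPowerSeries.continuous_subst ha.const

end Topology

variable {R : Type*} [CommRing R]

theorem constantCoeff_substAlgHom_eq_zero {a f : R⟦X⟧} (ha : constantCoeff a = 0)
    (hf : constantCoeff f = 0) :
    constantCoeff (substAlgHom (HasSubst.of_constantCoeff_zero' ha) f) = 0 := by
  rw [coe_substAlgHom]
  exact constantCoeff_subst_eq_zero ha f hf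

theorem coeff_pow_of_expChar (p : ℕ) [ExpChar R p] (f : R⟦X⟧) (n : ℕ) :
    coeff n (f ^ p) = if p ∣ n then coeff (n / p) f ^ p else 0 := by
  have hp : p ≠ 0 := expChar_ne_zero R p
  rw [← MvPowerSeries.map_frobenius_expand p hp]
  change coeff n (map (frobenius R p) (expand p hp f)) = _
  rw [coeff_map, coeff_expand, apply_ite (frobenius R p), map_zero, frobenius_def]

/-- `y ↦ a + c y²` contracts the `X`-adic metric on series without constant term. -/
theorem eq_of_eq_add_mul_sq {a c y z : R⟦X⟧} (hy : y = a + c * y ^ 2) (hz : z = a + c * z ^ 2)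
    (hy₀ : constantCoeff y = 0) (hz₀ : constantCoeff z = 0) : y = z := by
  have hunit : IsUnit (1 - c * (y + z)) := by
    rw [isUnit_iff_constantCoeff]
    simp [hy₀, hz₀]
  rw [← sub_eq_zero, ← hunit.mul_right_eq_zero]
  linear_combination hy - hz

end PowerSeries

theorem AlgEquiv.pow_eq_one_iff_of_toAlgHom_eq {R A : Type*} [CommSemiring R] [Semiring A]
    [Algebra R A] {e : A ≃ₐ[R] A} {f : A →ₐ[R] A} (h : (e : A →ₐ[R] A) = f) (n : ℕ) :
    e ^ n = 1 ↔ f ^ n = 1 := by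
  rw [← DFunLike.coe_fn_eq, ← DFunLike.coe_fn_eq (F := A →ₐ[R] A), AlgEquiv.coe_pow,
    AlgHom.coe_pow, ← h, AlgEquiv.coe_toAlgHom]
  rfl

section CharTwo

variable {R : Type*} [CommRing R] [CharP R 2]

theorem CharTwo.boole_add_boole (p q : Prop) [Decidable p] [Decidable q] :
    ((if p then 1 else 0) + if q then 1 else 0 : R) = if Xor p q then 1 else 0 := by
  by_cases p <;> by_cases q <;> simp [*, CharTwo.add_self_eq_zero]

theorem CharTwo.eq_add_add_mul_sq_comm {x y : R} (h : y = x + x ^ 2 + (1 + x ^ 2) * y ^ 2) :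
    x = y + y ^ 2 + (1 + y ^ 2) * x ^ 2 := by
  linear_combination (norm := ring_nf) h
  reduce_mod_char!

variable {x y v : R}

theorem CharTwo.add_sq_mul_eq_add_add_mul_sq (hv : (1 + x ^ 2) * v = 1)
    (hy : y = x + (1 + x ^ 2) * y ^ 2) :
    y + x ^ 2 * v = x + x ^ 2 + (1 + x ^ 2) * (y + x ^ 2 * v) ^ 2 := by
  linear_combination (norm := ring_nf) hy + (x ^ 2 - x ^ 4 * v) * hv
  reduce_mod_char!

theorem CharTwo.add_sq_mul_eq_add_mul_sq (hv : (1 + x ^ 2) * v = 1)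
    (hy : y = x + (1 + x ^ 2) * y ^ 2) :
    y + x ^ 2 * v = y + (1 + y ^ 2) * (y + x ^ 2 * v) ^ 2 := by
  -- Multiply the goal by `(1 + x²)² = v⁻²`, then reduce modulo `hy` in characteristic 2.
  set w := 1 + x ^ 2
  set ρ := y + x ^ 2 * v
  linear_combination (norm := skip)
    (v ^ 2 * x ^ 2 * (w - (1 + y ^ 2) * (w * ρ + w * y + x ^ 2)) -
      (1 + w * v) * (ρ - y - (1 + y ^ 2) * ρ ^ 2)) * hv +
    v ^ 2 * ((1 + y ^ 2) * w + y + x + w) * hy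
  simp only [w, ρ]
  ring_nf
  reduce_mod_char!

end CharTwo

def PhiBlock (n : ℕ) : Prop := ∃ j, 6 * 2 ^ j ≤ n ∧ n < 8 * 2 ^ j

theorem PhiBlock.six_le {n : ℕ} (h : PhiBlock n) : 6 ≤ n := by
  obtain ⟨j, hj, -⟩ := h
  have := Nat.one_le_two_pow (n := j)
  omega

theorem phiBlock_exponent_unique {n i j : ℕ} (hi : 6 * 2 ^ i ≤ n ∧ n < 8 * 2 ^ i)
    (hj : 6 * 2 ^ j ≤ n ∧ n < 8 * 2 ^ j) : i = j := by
  have key : ∀ {i j : ℕ}, i < j → 8 * 2 ^ i ≤ 6 * 2 ^ j := fun {i j} h => by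
    have := Nat.pow_le_pow_right two_pos h
    rw [pow_succ] at this
    omega
  rcases Nat.lt_trichotomy i j with h | h | h
  · have := key h; omega
  · exact h
  · have := key h; omega

theorem phiBlock_two_mul_iff {m : ℕ} : PhiBlock (2 * m) ↔ m = 3 ∨ PhiBlock m := by
  constructor
  · rintro ⟨_ | j, hj⟩
    · omega
    · exact Or.inr ⟨j, by rw [pow_succ] at hj; omega⟩
  · rintro (rfl | ⟨j, hj⟩)
    · exact ⟨0, by norm_num⟩
    · exact ⟨j + 1, by rw [pow_succ]; omega⟩

theorem phiBlock_two_mul_add_one_iff {m : ℕ} : PhiBlock (2 * m + 1) ↔ PhiBlock (2 * m) :=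
  exists_congr fun _ => by omega

def PhiSupport (n : ℕ) : Prop := n = 1 ∨ n = 2 ∨ (Even n ∧ PhiBlock n)

theorem phiSupport_two_mul_add_one_iff {m : ℕ} : PhiSupport (2 * m + 1) ↔ m = 0 := by
  simp only [PhiSupport, Nat.not_even_two_mul_add_one, false_and, or_false]
  omega

theorem phiSupport_two_mul_iff {m : ℕ} : PhiSupport (2 * m) ↔ m = 1 ∨ PhiBlock (2 * m) := by
  simp only [PhiSupport, even_two_mul, true_and]
  by_cases hB : PhiBlock (2 * m) <;> simp [hB]

theorem phiSupport_two_mul_add_two_iff (m : ℕ) :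
    PhiSupport (2 * (m + 1)) ↔ Xor (PhiSupport (m + 1)) (PhiSupport m) := by
  rw [phiSupport_two_mul_iff, phiBlock_two_mul_iff]
  obtain ⟨r, rfl | rfl⟩ := Nat.even_or_odd' m
  · rw [phiSupport_two_mul_add_one_iff, phiSupport_two_mul_iff, phiBlock_two_mul_add_one_iff]
    have h6 := PhiBlock.six_le (n := 2 * r)
    by_cases hB : PhiBlock (2 * r) <;> simp [hB, Xor] at h6 ⊢ <;> omega
  · rw [show 2 * r + 1 + 1 = 2 * (r + 1) by ring, phiSupport_two_mul_add_one_iff,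
      phiSupport_two_mul_iff]
    have h6 := PhiBlock.six_le (n := 2 * (r + 1))
    by_cases hB : PhiBlock (2 * (r + 1)) <;> simp [hB, Xor] at h6 ⊢ <;> omega

section Series

variable {k : Type*} [Field k]

open Classical in
theorem coeff_phiTail (n : ℕ) :
    coeff n (phiTail k) = if Even n ∧ PhiBlock n then 1 else 0 := by
  have hblock : ∀ {j l}, l < 2 ^ j → n = 6 * 2 ^ j + 2 * l → 6 * 2 ^ j ≤ n ∧ n < 8 * 2 ^ j :=
    fun _ _ => by omega
  rw [phiTail, coeff_mk, Finset.sum_congr rfl fun j _ => Finset.sum_ite_zero _ _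
      (fun l _ l' _ h h' => by omega) 1, Finset.sum_ite_zero]
  · refine if_congr ⟨?_, ?_⟩ rfl rfl
    · rintro ⟨j, -, l, hl, rfl⟩
      exact ⟨⟨3 * 2 ^ j + l, by omega⟩, j, hblock (Finset.mem_range.mp hl) rfl⟩
    · rintro ⟨⟨r, hr⟩, j, hj⟩
      have := j.lt_two_pow_self
      exact ⟨j, Finset.mem_range.mpr (by omega), (n - 6 * 2 ^ j) / 2,
        Finset.mem_range.mpr (by omega), by omega⟩
  · rintro i - j - ⟨l, hl, hi⟩ ⟨l', hl', hj⟩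
    exact phiBlock_exponent_unique (hblock (Finset.mem_range.mp hl) hi)
      (hblock (Finset.mem_range.mp hl') hj)

open Classical in
theorem coeff_phiSeries (n : ℕ) :
    coeff n (phiSeries k) = if PhiSupport n then 1 else 0 := by
  rw [phiSeries, map_add, map_add, coeff_X, coeff_X_pow, coeff_phiTail]
  by_cases hB : Even n ∧ PhiBlock n
  · have := hB.2.six_le
    simp [PhiSupport, hB, show n ≠ 1 by omega, show n ≠ 2 by omega]
  · unfold PhiSupport
    split_ifs <;> simp_all

theorem constantCoeff_phiSeries : constantCoeff (phiSeries k) = 0 := by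
  classical
  rw [← coeff_zero_eq_constantCoeff_apply, coeff_phiSeries, if_neg]
  rintro (h | h | ⟨-, hB⟩)
  · omega
  · omega
  · have := hB.six_le
    omega

theorem coeff_one_phiSeries : coeff 1 (phiSeries k) = 1 := by
  classical
  rw [coeff_phiSeries, if_pos (show PhiSupport 1 from Or.inl rfl)]

theorem phiSeries_eq_X_add [CharP k 2] : phiSeries k = X + (1 + X ^ 2) * phiSeries k ^ 2 := by
  classical
  have hsq (m : ℕ) :
      coeff m (phiSeries k ^ 2) = if 2 ∣ m ∧ PhiSupport (m / 2) then 1 else 0 := by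
    rw [coeff_pow_of_expChar, coeff_phiSeries, ite_and]
    simp
  ext n
  rw [add_mul, one_mul, map_add, map_add, coeff_X, coeff_X_pow_mul', hsq, hsq, coeff_phiSeries]
  obtain ⟨r, rfl | rfl⟩ := Nat.even_or_odd' n
  · rcases r with _ | s
    · simp [PhiSupport]
    · simp only [Nat.dvd_mul_right, true_and, Nat.mul_div_cancel_left _ two_pos,
        show 2 * (s + 1) ≠ 1 by omega, if_false, zero_add, show 2 ≤ 2 * (s + 1) by omega,
        if_true, show (2 * (s + 1) - 2) = 2 * s by omega]
      rw [CharTwo.boole_add_boole]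
      exact if_congr (phiSupport_two_mul_add_two_iff s) rfl rfl
  · simp only [phiSupport_two_mul_add_one_iff]
    split_ifs <;> simp_all
    omega

variable (k) in
def rhoSeries : k⟦X⟧ := phiSeries k + X ^ 2 * (1 + X ^ 2)⁻¹

theorem constantCoeff_rhoSeries : constantCoeff (rhoSeries k) = 0 := by
  simp [rhoSeries, constantCoeff_phiSeries]

theorem one_add_X_sq_mul_inv : (1 + X ^ 2 : k⟦X⟧) * (1 + X ^ 2)⁻¹ = 1 :=
  PowerSeries.mul_inv_cancel _ (by simp)

variable (k) in
def phiSubst : k⟦X⟧ →ₐ[k] k⟦X⟧ :=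
  substAlgHom (HasSubst.of_constantCoeff_zero' constantCoeff_phiSeries)

variable (k) in
def rhoSubst : k⟦X⟧ →ₐ[k] k⟦X⟧ :=
  substAlgHom (HasSubst.of_constantCoeff_zero' constantCoeff_rhoSeries)

section Topology

variable [UniformSpace k] [DiscreteUniformity k]

theorem continuous_phiSubst : Continuous (phiSubst k) := continuous_substAlgHom _

theorem continuous_rhoSubst : Continuous (rhoSubst k) := continuous_substAlgHom _

end Topology

theorem phiSubst_X : phiSubst k X = phiSeries k := substAlgHom_X _

theorem rhoSubst_X : rhoSubst k X = rhoSeries k := substAlgHom_X _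

variable [CharP k 2]

theorem rhoSeries_eq_X_add : rhoSeries k = X + X ^ 2 + (1 + X ^ 2) * rhoSeries k ^ 2 :=
  CharTwo.add_sq_mul_eq_add_add_mul_sq one_add_X_sq_mul_inv phiSeries_eq_X_add

theorem rhoSeries_eq_phiSeries_add_mul_sq :
    rhoSeries k = phiSeries k + (1 + phiSeries k ^ 2) * rhoSeries k ^ 2 :=
  CharTwo.add_sq_mul_eq_add_mul_sq one_add_X_sq_mul_inv phiSeries_eq_X_add

theorem rhoSeries_ne_X : rhoSeries k ≠ X := by
  intro h
  have h4 : (X : k⟦X⟧) ^ 4 = 0 := by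
    have := rhoSeries_eq_X_add (k := k)
    rw [h] at this
    linear_combination -this - X ^ 2 * (CharTwo.two_eq_zero : (2 : k⟦X⟧) = 0)
  exact pow_ne_zero 4 X_ne_zero h4

theorem phiSubst_phiSeries : phiSubst k (phiSeries k) = rhoSeries k := by
  refine eq_of_eq_add_mul_sq ?_ rhoSeries_eq_phiSeries_add_mul_sq
    (constantCoeff_substAlgHom_eq_zero constantCoeff_phiSeries constantCoeff_phiSeries)
    constantCoeff_rhoSeries
  conv_lhs => rw [phiSeries_eq_X_add]
  simp only [map_add, map_mul, map_pow, map_one, phiSubst_X]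

theorem rhoSubst_rhoSeries : rhoSubst k (rhoSeries k) = X := by
  refine eq_of_eq_add_mul_sq ?_ (CharTwo.eq_add_add_mul_sq_comm rhoSeries_eq_X_add)
    (constantCoeff_substAlgHom_eq_zero constantCoeff_rhoSeries constantCoeff_rhoSeries)
    constantCoeff_X
  conv_lhs => rw [rhoSeries_eq_X_add]
  simp only [map_add, map_mul, map_pow, map_one, rhoSubst_X]

theorem phiSubst_mul_self : phiSubst k * phiSubst k = rhoSubst k := by
  let : UniformSpace k := ⊥
  refine algHom_ext_of_continuous (continuous_phiSubst.comp continuous_phiSubst)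
    continuous_rhoSubst ?_
  rw [AlgHom.mul_apply, phiSubst_X, phiSubst_phiSeries, rhoSubst_X]

theorem rhoSubst_mul_self : rhoSubst k * rhoSubst k = 1 := by
  let : UniformSpace k := ⊥
  refine algHom_ext_of_continuous (continuous_rhoSubst.comp continuous_rhoSubst)
    continuous_id ?_
  rw [AlgHom.mul_apply, rhoSubst_X, rhoSubst_rhoSeries, AlgHom.one_apply]

theorem phiSubst_pow_four : phiSubst k ^ 4 = 1 := by
  rw [show 4 = 2 * 2 by rfl, pow_mul, sq (phiSubst k), phiSubst_mul_self, sq, rhoSubst_mul_self]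

theorem phiSubst_sq_ne_one : phiSubst k ^ 2 ≠ 1 := by
  rw [sq, phiSubst_mul_self]
  intro h
  apply rhoSeries_ne_X (k := k)
  rw [← rhoSubst_X, h, AlgHom.one_apply]

end Series

/-- for `k` of characteristic 2 there is a continuous `k`-algebra automorphism
`σ` of `k[[t]]` with `σ(t) = φ(t)`; moreover `φ(t) ≡ t mod t²` (so any such `σ` lies in the
Nottingham group) and every such `σ` has order exactly 4: `σ⁴ = 1` and `σ² ≠ 1`. -/
theorem nottingham_order_four [CharP k 2] :
    letI := psTop k
    (∃ σ : PowerSeries k ≃ₐ[k] PowerSeries k,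
        Continuous σ ∧ Continuous σ.symm ∧ σ (X : PowerSeries k) = phiSeries k) ∧
      PowerSeries.coeff 0 (phiSeries k) = 0 ∧ PowerSeries.coeff 1 (phiSeries k) = 1 ∧
      ∀ σ : PowerSeries k ≃ₐ[k] PowerSeries k,
        Continuous σ → σ (X : PowerSeries k) = phiSeries k → σ ^ 4 = 1 ∧ σ ^ 2 ≠ 1 := by
  -- `psTop k` is, definitionally, the `WithPiTopology` topology for the discrete uniformity on `k`.
  let : UniformSpace k := ⊥
  refine ⟨⟨AlgEquiv.ofAlgHom (phiSubst k) (phiSubst k ^ 3) ?_ ?_, continuous_phiSubst, ?_,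
    phiSubst_X⟩, (coeff_zero_eq_constantCoeff_apply _).trans constantCoeff_phiSeries,
    coeff_one_phiSeries, fun σ hσ hσX => ?_⟩
  · exact (pow_succ' _ 3).symm.trans phiSubst_pow_four
  · exact (pow_succ _ 3).symm.trans phiSubst_pow_four
  · change Continuous ⇑(phiSubst k ^ 3)
    rw [AlgHom.coe_pow]
    exact continuous_phiSubst.iterate 3
  · have hσS : (σ : k⟦X⟧ →ₐ[k] k⟦X⟧) = phiSubst k :=
      algHom_ext_of_continuous hσ continuous_phiSubst (hσX.trans phiSubst_X.symm)
    exact ⟨(AlgEquiv.pow_eq_one_iff_of_toAlgHom_eq hσS 4).mpr phiSubst_pow_four,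
      (AlgEquiv.pow_eq_one_iff_of_toAlgHom_eq hσS 2).not.mpr phiSubst_sq_ne_one⟩
end
end

section
/- Let k be a field of characteristic 2. The map σ on the polynomial ring k[x,y,z] given by σ(x) = x+y, σ(y) = y, σ(z) = x+z is a k-algebra automorphism of order exactly 4, and it maps the polynomial F = z²y + (z+x)y² + x³ to itself. -/
open MvPolynomial
noncomputable section

variable (k : Type*) [Field k]

/-- The cubic `F = z²y + (z+x)y² + x³` in `k[x,y,z]`, with `x = X 0`, `y = X 1`, `z = X 2`. -/
def cubicF : MvPolynomial (Fin 3) k :=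
  X 2 ^ 2 * X 1 + (X 2 + X 0) * X 1 ^ 2 + X 0 ^ 3

/-- for `k` of characteristic 2, there is a `k`-algebra automorphism `σ` of
`k[x,y,z]` with `σ(x) = x+y`, `σ(y) = y`, `σ(z) = x+z`; it has order exactly 4
(`σ⁴ = 1`, `σ² ≠ 1`) and it fixes `F = z²y + (z+x)y² + x³`. -/
theorem cubic_automorphism [CharP k 2] :
    ∃ σ : MvPolynomial (Fin 3) k ≃ₐ[k] MvPolynomial (Fin 3) k,
      σ (X 0) = X 0 + X 1 ∧ σ (X 1) = X 1 ∧ σ (X 2) = X 0 + X 2 ∧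
        σ ^ 4 = 1 ∧ σ ^ 2 ≠ 1 ∧ σ (cubicF k) = cubicF k := by
  have h2 : (2 : MvPolynomial (Fin 3) k) = 0 := by
    exact_mod_cast CharP.cast_eq_zero (MvPolynomial (Fin 3) k) 2
  let f : MvPolynomial (Fin 3) k →ₐ[k] MvPolynomial (Fin 3) k :=
    aeval ![X 0 + X 1, X 1, X 0 + X 2]
  let g : MvPolynomial (Fin 3) k →ₐ[k] MvPolynomial (Fin 3) k :=
    aeval ![X 0 + X 1, X 1, X 0 + X 1 + X 2]
  have hfg : f.comp g = AlgHom.id k _ := by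
    apply MvPolynomial.algHom_ext
    intro i
    fin_cases i <;> simp [f, g] <;>
      first
        | linear_combination (X 0 + X 1 : MvPolynomial (Fin 3) k) * h2
        | linear_combination (X 0 : MvPolynomial (Fin 3) k) * h2
        | linear_combination (-(X 0) : MvPolynomial (Fin 3) k) * h2
        | linear_combination (X 1 : MvPolynomial (Fin 3) k) * h2
        | linear_combination (-(X 1) : MvPolynomial (Fin 3) k) * h2
        | linear_combination (-(X 0 + X 1) : MvPolynomial (Fin 3) k) * h2
  have hgf : g.comp f = AlgHom.id k _ := by
    apply MvPolynomial.algHom_ext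
    intro i
    fin_cases i <;> simp [f, g] <;>
      first
        | linear_combination (X 0 + X 1 : MvPolynomial (Fin 3) k) * h2
        | linear_combination (X 0 : MvPolynomial (Fin 3) k) * h2
        | linear_combination (-(X 0) : MvPolynomial (Fin 3) k) * h2
        | linear_combination (X 1 : MvPolynomial (Fin 3) k) * h2
        | linear_combination (-(X 1) : MvPolynomial (Fin 3) k) * h2
        | linear_combination (-(X 0 + X 1) : MvPolynomial (Fin 3) k) * h2
  let σ : MvPolynomial (Fin 3) k ≃ₐ[k] MvPolynomial (Fin 3) k :=
    AlgEquiv.ofAlgHom f g hfg hgf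
  have hx : σ (X 0) = X 0 + X 1 := by simp [σ, f]
  have hy : σ (X 1) = X 1 := by simp [σ, f]
  have hz : σ (X 2) = X 0 + X 2 := by simp [σ, f]
  have h2x : σ (σ (X 0)) = X 0 := by
    rw [hx, map_add, hx, hy]
    linear_combination (X 1 : MvPolynomial (Fin 3) k) * h2
  have h2y : σ (σ (X 1)) = X 1 := by rw [hy, hy]
  have h2z : σ (σ (X 2)) = X 1 + X 2 := by
    rw [hz, map_add, hx, hz]
    linear_combination (X 0 : MvPolynomial (Fin 3) k) * h2
  have h4x : σ (σ (σ (σ (X 0)))) = X 0 := by rw [h2x, h2x]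
  have h4y : σ (σ (σ (σ (X 1)))) = X 1 := by rw [h2y, h2y]
  have h4z : σ (σ (σ (σ (X 2)))) = X 2 := by
    rw [h2z, map_add, map_add, h2y, h2z]
    linear_combination (X 1 : MvPolynomial (Fin 3) k) * h2
  refine ⟨σ, hx, hy, hz, ?_, ?_, ?_⟩
  · have key : ((σ ^ 4 : MvPolynomial (Fin 3) k ≃ₐ[k] MvPolynomial (Fin 3) k) :
        MvPolynomial (Fin 3) k →ₐ[k] MvPolynomial (Fin 3) k)
        = ((1 : MvPolynomial (Fin 3) k ≃ₐ[k] MvPolynomial (Fin 3) k) :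
        MvPolynomial (Fin 3) k →ₐ[k] MvPolynomial (Fin 3) k) := by
      apply MvPolynomial.algHom_ext
      intro i
      simp only [AlgHom.coe_coe, AlgEquiv.one_apply, pow_succ, pow_zero, one_mul,
        AlgEquiv.mul_apply]
      fin_cases i
      · exact h4x
      · exact h4y
      · exact h4z
    exact AlgEquiv.coe_algHom_injective key
  · intro h
    have h1 : (σ ^ 2) (X 2) = X 2 := by rw [h]; rfl
    have h2' : (σ ^ 2) (X 2) = X 1 + X 2 := by
      simpa only [pow_succ, pow_zero, one_mul, AlgEquiv.mul_apply] using h2z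
    rw [h1] at h2'
    have hX1 : (X 1 : MvPolynomial (Fin 3) k) = 0 := by linear_combination -h2'
    exact MvPolynomial.X_ne_zero 1 hX1
  · simp only [cubicF, map_add, map_mul, map_pow, hx, hy, hz]
    linear_combination
      (2 * X 0 ^ 2 * X 1 + X 0 * X 2 * X 1 + 2 * X 0 * X 1 ^ 2 + X 1 ^ 3 :
      MvPolynomial (Fin 3) k) * h2
end
end

section
/- Let k be a field of characteristic 2 and A = k[[t,w]]/(w + (1+t)w² + t³) with σ(t) = (t+w)/(1+t), σ(w) = w/(1+t). Then σ²(t) ≠ t; i.e., σ² is not the identity on A. -/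
open PowerSeries
noncomputable section
noncomputable section

variable (k : Type*) [Field k]

section Aux

theorem ring_inverse_eq_of_mul_eq_one {R : Type*} [CommRing R] {a b : R} (h : a * b = 1) :
    Ring.inverse a = b := by
  have ha : IsUnit a := IsUnit.of_mul_eq_one b h
  calc Ring.inverse a = Ring.inverse a * (a * b) := by rw [h, mul_one]
    _ = (Ring.inverse a * a) * b := by ring
    _ = b := by rw [Ring.inverse_mul_cancel a ha, one_mul]

theorem tw_not_mem (k : Type*) [Field k] :
    (PowerSeries.C (R := PowerSeries k) X * X : PowerSeries (PowerSeries k)) ∉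
      Ideal.span {relF k} := by
  intro hmem
  rw [Ideal.mem_span_singleton] at hmem
  obtain ⟨g, hg⟩ := hmem
  set φ := PowerSeries.constantCoeff (R := PowerSeries k) with hφ
  have hrel : φ (relF k) = X ^ 3 := by
    simp [relF, hφ]
  have h0 : φ g = 0 := by
    have := congrArg φ hg
    rw [map_mul, map_mul, hrel, PowerSeries.constantCoeff_X, mul_zero] at this
    rcases mul_eq_zero.mp this.symm with h | h
    · exact absurd h (pow_ne_zero 3 PowerSeries.X_ne_zero)
    · exact h
  obtain ⟨h, hh⟩ : (X : PowerSeries (PowerSeries k)) ∣ g := PowerSeries.X_dvd_iff.mpr h0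
  rw [hh] at hg
  have hg' : PowerSeries.C (R := PowerSeries k) X = relF k * h := by
    have hx : (X : PowerSeries (PowerSeries k)) * PowerSeries.C (R := PowerSeries k) X
        = X * (relF k * h) := by rw [mul_comm X (PowerSeries.C (R := PowerSeries k) X), hg]; ring
    exact mul_left_cancel₀ PowerSeries.X_ne_zero hx
  have hX : (X : PowerSeries k) = X ^ 3 * φ h := by
    have := congrArg φ hg'
    rw [map_mul, hrel] at this
    simpa [hφ] using this
  have hX' : (1 : PowerSeries k) = X ^ 2 * φ h := by
    have hx : (X : PowerSeries k) * 1 = X * (X ^ 2 * φ h) := by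
      nth_rewrite 1 [hX]; ring
    exact mul_left_cancel₀ PowerSeries.X_ne_zero hx
  have := congrArg (PowerSeries.constantCoeff (R := k)) hX'
  simp at this

end Aux

set_option maxHeartbeats 1000000 in
set_option synthInstance.maxHeartbeats 1000000 in
/-- for `k` of characteristic 2, `A = k[[t,w]]/(w + (1+t)w² + t³)` and `σ` the
`k`-algebra automorphism of `A` with `σ(t) = (t+w)/(1+t)`, `σ(w) = w/(1+t)`, the square `σ²`
moves `t`: `σ²(t) ≠ t`; in particular `σ²` is not the identity on `A`. -/
theorem NgA_sigma_sq_ne_id [CharP k 2] (σ : NgA k ≃ₐ[k] NgA k)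
    (hcont : letI := aTop k; Continuous σ)
    (ht : σ (tA k) = (tA k + wA k) * Ring.inverse (1 + tA k))
    (hw : σ (wA k) = wA k * Ring.inverse (1 + tA k)) :
    (σ ^ 2) (tA k) ≠ tA k ∧ σ ^ 2 ≠ 1 := by
  have hu1 : IsUnit (1 + tA k) := by
    have hunit : IsUnit (1 + PowerSeries.C (R := PowerSeries k) X) := by
      rw [PowerSeries.isUnit_iff_constantCoeff]
      simp only [map_add, map_one, PowerSeries.constantCoeff_C]
      rw [PowerSeries.isUnit_iff_constantCoeff]
      simp
    have := hunit.map (Ideal.Quotient.mk (Ideal.span {relF k}))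
    rwa [map_add, map_one] at this
  have huW : IsUnit (1 + wA k) := by
    have hunit : IsUnit (1 + (X : PowerSeries (PowerSeries k))) := by
      rw [PowerSeries.isUnit_iff_constantCoeff]
      simp
    have := hunit.map (Ideal.Quotient.mk (Ideal.span {relF k}))
    rwa [map_add, map_one] at this
  have h2 : (2 : NgA k) = 0 := by
    have hk : ((2 : ℕ) : k) = 0 := CharP.cast_eq_zero k 2
    have := congrArg (algebraMap k (NgA k)) hk
    rw [map_natCast] at this
    exact_mod_cast this
  have hself : ∀ x : NgA k, x + x = 0 := by
    intro x; rw [← two_mul, h2, zero_mul]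
  have key1 : σ (tA k) + σ (wA k) = tA k * Ring.inverse (1 + tA k) := by
    rw [ht, hw, ← add_mul]
    congr 1
    rw [add_assoc, hself, add_zero]
  have key2 : 1 + σ (tA k) = (1 + wA k) * Ring.inverse (1 + tA k) := by
    have hW : (1 + wA k : NgA k) = (1 + tA k) + (tA k + wA k) := by
      rw [show (1 + tA k) + (tA k + wA k) = 1 + ((tA k + tA k) + wA k) by ring,
        hself, zero_add]
    rw [hW, add_mul, Ring.mul_inverse_cancel _ hu1, ht]
  have key3 : Ring.inverse (1 + σ (tA k)) = (1 + tA k) * Ring.inverse (1 + wA k) := by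
    apply ring_inverse_eq_of_mul_eq_one
    rw [key2]
    calc (1 + wA k) * Ring.inverse (1 + tA k) * ((1 + tA k) * Ring.inverse (1 + wA k))
        = ((1 + tA k) * Ring.inverse (1 + tA k)) * ((1 + wA k) * Ring.inverse (1 + wA k)) := by
          ring
      _ = 1 := by rw [Ring.mul_inverse_cancel _ hu1, Ring.mul_inverse_cancel _ huW, one_mul]
  have hσi1 : σ (Ring.inverse (1 + tA k)) = (1 + tA k) * Ring.inverse (1 + wA k) := by
    have h1 : σ (1 + tA k) * σ (Ring.inverse (1 + tA k)) = 1 := by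
      rw [← map_mul, Ring.mul_inverse_cancel _ hu1, map_one]
    have h2' := ring_inverse_eq_of_mul_eq_one h1
    rw [← h2', map_add, map_one, key3]
  have hfin : (σ ^ 2) (tA k) = tA k * Ring.inverse (1 + wA k) := by
    have hpow : (σ ^ 2) (tA k) = σ (σ (tA k)) := by
      rw [pow_two]; rfl
    rw [hpow]
    nth_rewrite 1 [ht]
    rw [map_mul, map_add, key1, hσi1]
    calc tA k * Ring.inverse (1 + tA k) * ((1 + tA k) * Ring.inverse (1 + wA k))
        = tA k * Ring.inverse (1 + wA k) * ((1 + tA k) * Ring.inverse (1 + tA k)) := by ring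
      _ = tA k * Ring.inverse (1 + wA k) := by
          rw [Ring.mul_inverse_cancel _ hu1, mul_one]
  have hTW : tA k * wA k ≠ 0 := by
    intro h
    have hmk : (Ideal.Quotient.mk (Ideal.span {relF k}))
        (PowerSeries.C (R := PowerSeries k) X * X) = 0 := by
      rw [map_mul]; exact h
    exact tw_not_mem k (Ideal.Quotient.eq_zero_iff_mem.mp hmk)
  have hne : (σ ^ 2) (tA k) ≠ tA k := by
    rw [hfin]
    intro hEq
    have h1 : tA k * Ring.inverse (1 + wA k) * (1 + wA k) = tA k * (1 + wA k) := by rw [hEq]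
    rw [Ring.inverse_mul_cancel_right _ _ huW, mul_add, mul_one] at h1
    exact hTW (left_eq_add.mp h1)
  exact ⟨hne, fun h => hne (by rw [h]; rfl)⟩
end
end
end

section
/- Let k be a field of characteristic 2, m an odd positive integer, and a ∈ k*. The map t ↦ t·(1 − a t^m)^{−1/m}, interpreted as t ↦ t·u where u ∈ k[[t]] is the unique power series with constant term 1 satisfying u^m = (1 + a t^m)^{−1} (using −1 = 1 in characteristic 2), defines an element of order exactly 2 in the Nottingham group over k. -/
open PowerSeries
noncomputable section

/-!
Put `g = 1 + a tᵐ`, so `uᵐ g = 1`. In characteristic 2 this gives `uᵐ = 1 + a tᵐ uᵐ = σ(g)`,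
and applying `σ` to `uᵐ g = 1` yields `(u σ(u))ᵐ = 1`. Since `m` is invertible in `k`, the only
`m`-th root of unity in `k⟦t⟧` with constant term 1 is 1 (the geometric sum `1 + v + ⋯ + vᵐ⁻¹`
is then a unit), so `u σ(u) = 1` and `σ²(t) = t u σ(u) = t`. Polynomials are dense, so a
continuous automorphism is determined by the image of `t`, whence `σ² = 1`; and `σ ≠ 1`
because `a ≠ 0` forces `u ≠ 1`.
-/

namespace PowerSeries

variable {R : Type*} [CommRing R]

theorem eq_one_of_pow_eq_one {m : ℕ} (hm : IsUnit (m : R)) {v : R⟦X⟧}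
    (hv0 : constantCoeff v = 1) (hv : v ^ m = 1) : v = 1 := by
  have hgeom : IsUnit (∑ i ∈ Finset.range m, v ^ i) := by
    simpa [isUnit_iff_constantCoeff, hv0] using hm
  rw [← sub_eq_zero, ← hgeom.mul_right_eq_zero, geom_sum_mul, hv, sub_self]

theorem constantCoeff_algEquiv_apply {k : Type*} [Field k] (σ : k⟦X⟧ ≃ₐ[k] k⟦X⟧) (f : k⟦X⟧) :
    constantCoeff (σ f) = constantCoeff f := by
  have hf : ¬ IsUnit (σ (f - C (constantCoeff f))) := by
    rw [isUnit_map_iff, isUnit_iff_constantCoeff]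
    simp
  rw [isUnit_iff_constantCoeff, map_sub, C_eq_algebraMap, σ.commutes, ← C_eq_algebraMap,
    map_sub, constantCoeff_C, isUnit_iff_ne_zero, not_not, sub_eq_zero] at hf
  exact hf

open scoped WithPiTopology in
theorem algHom_ext_of_continuous_s16 [TopologicalSpace R] {S : Type*} [Semiring S] [Algebra R S]
    [TopologicalSpace S] [T2Space S] {φ ψ : R⟦X⟧ →ₐ[R] S}
    (hφ : Continuous φ) (hψ : Continuous ψ) (h : φ X = ψ X) :
    φ = ψ := by
  have hpoly : φ.comp (Polynomial.coeToPowerSeries.algHom R) =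
      ψ.comp (Polynomial.coeToPowerSeries.algHom R) :=
    Polynomial.algHom_ext (by simpa using h)
  exact DFunLike.coe_injective <|
    (WithPiTopology.denseRange_toPowerSeries R).equalizer hφ hψ (congrArg DFunLike.coe hpoly)

end PowerSeries

theorem mul_map_pow_eq_one_of_charTwo {A : Type*} [CommRing A] [CharP A 2] (σ : A →+* A)
    {m : ℕ} {x u c : A} (hc : σ c = c) (hx : σ x = x * u) (hu : u ^ m * (1 + c * x ^ m) = 1) :
    (u * σ u) ^ m = 1 := by
  have hσu : σ u ^ m * (1 + c * x ^ m * u ^ m) = 1 := by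
    simpa [hc, hx, mul_pow, mul_assoc] using congrArg σ hu
  have hum : u ^ m = 1 + c * x ^ m * u ^ m := by
    rw [← CharTwo.sub_eq_add, eq_sub_iff_add_eq, ← hu]
    ring
  rw [mul_pow, hum, mul_comm, hσu]

theorem klopsch_order_two_general (k : Type*) [Field k] [CharP k 2] (m : ℕ)
    (hodd : Odd m) (a : k) (ha : a ≠ 0) (u : PowerSeries k)
    (hu0 : PowerSeries.constantCoeff u = 1)
    (hum : u ^ m = (1 + PowerSeries.C a * X ^ m : PowerSeries k)⁻¹)
    (σ : PowerSeries k ≃ₐ[k] PowerSeries k)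
    (hcont : letI := psTop k; Continuous σ)
    (hσ : σ (X : PowerSeries k) = X * u) :
    (PowerSeries.coeff 0 (σ (X : PowerSeries k)) = 0 ∧
        PowerSeries.coeff 1 (σ (X : PowerSeries k)) = 1) ∧
      σ ^ 2 = 1 ∧ σ ≠ 1 := by
  have hmk : IsUnit (m : k) := by
    simp [CharTwo.natCast_eq_ite, Nat.not_even_iff_odd.mpr hodd]
  have hg : u ^ m * (1 + C a * X ^ m) = 1 := by
    rw [hum]
    exact PowerSeries.inv_mul_cancel _ (by simp [hodd.pos.ne'])
  have : CharP k⟦X⟧ 2 := charP_of_injective_algebraMap (algebraMap k k⟦X⟧).injective 2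
  have hinv : u * σ u = 1 :=
    eq_one_of_pow_eq_one hmk (by simp [constantCoeff_algEquiv_apply, hu0]) <|
      mul_map_pow_eq_one_of_charTwo σ.toRingHom (by simpa using σ.commutes a) hσ hg
  have hσX : (σ ^ 2) X = X := by
    rw [pow_two, AlgEquiv.mul_apply, hσ, map_mul, hσ, mul_assoc, hinv, mul_one]
  refine ⟨⟨by simp [hσ], by simp [hσ, hu0]⟩, ?_, ?_⟩
  · let _ : TopologicalSpace k := ⊥
    have : DiscreteTopology k := ⟨rfl⟩
    open scoped WithPiTopology in
    exact AlgEquiv.coe_toAlgHom_injective <|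
      algHom_ext_of_continuous_s16 (S := k⟦X⟧) (hcont.comp hcont) continuous_id hσX
  · rintro rfl
    have hu : u = 1 := mul_left_cancel₀ X_ne_zero (by simpa using hσ.symm)
    exact ha (by simpa [hu, hodd.pos.ne'] using congrArg (coeff m) hg)

/-- let `k` have characteristic 2, `m` an odd positive integer, `a ∈ k*`, and
let `u ∈ k[[t]]` be the (unique) power series with constant term 1 and `uᵐ = (1 + a tᵐ)⁻¹`
(note `−1 = 1` in characteristic 2).  Then any continuous `k`-algebra automorphism `σ` of
`k[[t]]` with `σ(t) = t·u` is an element of order exactly 2 of the Nottingham group: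
`σ(t) ≡ t mod t²`, `σ² = 1` and `σ ≠ 1`. -/
theorem klopsch_order_two (k : Type*) [Field k] [CharP k 2] (m : ℕ) (hm : 0 < m)
    (hodd : Odd m) (a : k) (ha : a ≠ 0) (u : PowerSeries k)
    (hu0 : PowerSeries.constantCoeff u = 1)
    (hum : u ^ m = (1 + PowerSeries.C a * X ^ m : PowerSeries k)⁻¹)
    (σ : PowerSeries k ≃ₐ[k] PowerSeries k)
    (hcont : letI := psTop k; Continuous σ)
    (hσ : σ (X : PowerSeries k) = X * u) :
    (PowerSeries.coeff 0 (σ (X : PowerSeries k)) = 0 ∧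
        PowerSeries.coeff 1 (σ (X : PowerSeries k)) = 1) ∧
      σ ^ 2 = 1 ∧ σ ≠ 1 :=
  klopsch_order_two_general k m hodd a ha u hu0 hum σ hcont hσ
end
end
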